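/- arXiv:1405.2331 — 4 statements merged into one kernel-verified Lean document; each statement's English description precedes it below -/
import Mathlib

section
/- Let 𝔤 be a finite-dimensional nilpotent real Lie algebra with dim 𝔤 ≥ 2, equipped with a norm making it a normed real vector space. Then for every X ∈ 𝔤 there exist a sequence (Yₖ)ₖ∈ℕ in 𝔤 converging to X and a sequence (𝔥ₖ)ₖ∈ℕ of pairwise distinct Lie ideals of 𝔤, each of codimension one, such that Yₖ ∈ 𝔥ₖ for every k. -/
/-! Since `𝔤` is nilpotent, its derived algebra `𝔡 = ⁅𝔤, 𝔤⁆` has codimension at least two: if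
`𝔡 + ℝ x = 𝔤` then `⁅𝔤, 𝔤⁆ = ⁅𝔤, 𝔡⁆`, so `𝔡` lies in every term of the lower central series and
vanishes, forcing `dim 𝔤 ≤ 1`. Every hyperplane containing `𝔡` is an ideal. Codimension two gives
linear forms `ψ`, `φ` vanishing on `𝔡` and a vector `e` with `ψ X = 0`, `ψ e = 1`, `φ e = 0` and `φ ≠ 0`.
The hyperplanes `ker (ψ + t φ)` are pairwise distinct ideals, and the projection
`X - t φ(X) e` of `X` onto `ker (ψ + t φ)` along `e` tends to `X` as `t → 0`. -/

open Module LinearMap Filter Topology LieModule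

theorem Module.Dual.exists_le_ker_apply_eq_one {K V : Type*} [Field K] [AddCommGroup V]
    [Module K V] {p : Submodule K V} {x : V} (hx : x ∉ p) :
    ∃ f : Dual K V, p ≤ ker f ∧ f x = 1 := by
  obtain ⟨f, hfx, hpf⟩ := p.exists_dual_map_eq_bot_of_notMem hx inferInstance
  refine ⟨(f x)⁻¹ • f, fun y hy => ?_, by simp [hfx]⟩
  have : f y = 0 := by simpa [hpf] using Submodule.mem_map_of_mem (f := f) hy
  simp [this]

theorem Module.Dual.exists_pair_of_sup_span_singleton_ne_top {K V : Type*} [Field K]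
    [AddCommGroup V] [Module K V] {p : Submodule K V}
    (hp : ∀ v : V, p ⊔ Submodule.span K {v} ≠ ⊤) (x : V) :
    ∃ (ψ φ : Dual K V) (e : V), p ⊔ Submodule.span K {x} ≤ ker ψ ∧
      p ⊔ Submodule.span K {e} ≤ ker φ ∧ ψ e = 1 ∧ φ ≠ 0 := by
  obtain ⟨e, -, he⟩ := SetLike.exists_of_lt (hp x).lt_top
  obtain ⟨d, -, hd⟩ := SetLike.exists_of_lt (hp e).lt_top
  obtain ⟨ψ, hψ, hψe⟩ := exists_le_ker_apply_eq_one he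
  obtain ⟨φ, hφ, hφd⟩ := exists_le_ker_apply_eq_one hd
  exact ⟨ψ, φ, e, hψ, hφ, hψe, fun h => by simp [h] at hφd⟩

theorem Module.Dual.injective_ker_add_smul {K V : Type*} [Field K] [AddCommGroup V] [Module K V]
    [FiniteDimensional K V] {ψ φ : Dual K V} {e : V} (hψe : ψ e = 1) (hφe : φ e = 0)
    (hφ : φ ≠ 0) : Function.Injective fun t : K => ker (ψ + t • φ) := by
  intro s t hst
  have : ψ + s • φ = ψ + t • φ :=
    eq_of_ker_eq_of_apply_eq e hst (by simp [hφe]) (by simp [hψe, hφe])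
  exact smul_left_injective K hφ (add_left_cancel this)

theorem sub_apply_smul_mem_ker {R M : Type*} [CommRing R] [AddCommGroup M] [Module R M]
    {f : Dual R M} {e : M} (he : f e = 1) (x : M) : x - f x • e ∈ ker f := by
  simp [he]

theorem exists_forall_ge_apply_smul_lt {V : Type*} [AddCommGroup V] [Module ℝ V] {N : V → ℝ}
    (hN : ∀ (a : ℝ) (x : V), N (a • x) = |a| * N x) {c : ℕ → ℝ} (hc : Tendsto c atTop (𝓝 0))
    (v : V) : ∀ ε : ℝ, 0 < ε → ∃ K : ℕ, ∀ k ≥ K, N (c k • v) < ε := by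
  have : Tendsto (fun k => |c k| * N v) atTop (𝓝 0) := by
    simpa using hc.abs.mul_const (N v)
  intro ε hε
  obtain ⟨K, hK⟩ := Metric.tendsto_atTop.mp this ε hε
  refine ⟨K, fun k hk => ?_⟩
  rw [hN]
  exact (le_abs_self _).trans_lt (by simpa using hK k hk)

theorem Nat.injective_one_div_cast_add_one {𝕜 : Type*} [DivisionRing 𝕜] [CharZero 𝕜] :
    Function.Injective fun k : ℕ => 1 / ((k : 𝕜) + 1) := by
  intro a b h
  simpa using h

theorem LieModule.lie_mem_lowerCentralSeries_one {R L M : Type*} [CommRing R] [LieRing L]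
    [LieAlgebra R L] [AddCommGroup M] [Module R M] [LieRingModule L M] [LieModule R L M]
    (x : L) (m : M) :
    ⁅x, m⁆ ∈ lowerCentralSeries R L M 1 :=
  LieSubmodule.lie_mem_lie (LieSubmodule.mem_top x) (LieSubmodule.mem_top m)

theorem LieModule.eq_bot_of_le_lie_top {R L M : Type*} [CommRing R] [LieRing L] [LieAlgebra R L]
    [AddCommGroup M] [Module R M] [LieRingModule L M] [LieModule R L M] [IsNilpotent L M]
    {N : LieSubmodule R L M} (h : N ≤ ⁅(⊤ : LieIdeal R L), N⁆) : N = ⊥ := by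
  have hN : ∀ k, N ≤ lowerCentralSeries R L M k := by
    intro k
    induction k with
    | zero => exact le_top
    | succ k ih =>
      rw [lowerCentralSeries_succ]
      exact h.trans (LieSubmodule.mono_lie_right _ ih)
  obtain ⟨k, hk⟩ := IsNilpotent.nilpotent R L M
  exact eq_bot_iff.mpr (hk ▸ hN k)

namespace LieAlgebra

def idealOfLowerCentralSeriesOneLE {R L : Type*} [CommRing R] [LieRing L] [LieAlgebra R L]
    (p : Submodule R L) (hp : (lowerCentralSeries R L L 1).toSubmodule ≤ p) : LieIdeal R L where
  toSubmodule := p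
  lie_mem {x y} _ := hp (lie_mem_lowerCentralSeries_one x y)

theorem lowerCentralSeries_one_le_lie_of_sup_span_eq_top {R L : Type*} [CommRing R] [LieRing L]
    [LieAlgebra R L] {x : L}
    (hx : (lowerCentralSeries R L L 1).toSubmodule ⊔ Submodule.span R {x} = ⊤) :
    lowerCentralSeries R L L 1 ≤ ⁅(⊤ : LieIdeal R L), lowerCentralSeries R L L 1⁆ := by
  set D := lowerCentralSeries R L L 1
  have hdecomp (a : L) : ∃ d ∈ D, ∃ c : R, d + c • x = a := by
    obtain ⟨d, hd, y, hy, rfl⟩ := Submodule.mem_sup.mp (hx ▸ Submodule.mem_top : a ∈ _)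
    obtain ⟨c, rfl⟩ := Submodule.mem_span_singleton.mp hy
    exact ⟨d, hd, c, rfl⟩
  have hx_lie (a : L) : ⁅a, x⁆ ∈ ⁅(⊤ : LieIdeal R L), D⁆ := by
    obtain ⟨d, hd, c, rfl⟩ := hdecomp a
    rw [add_lie, smul_lie, lie_self, smul_zero, add_zero, ← lie_skew, neg_mem_iff]
    exact LieSubmodule.lie_mem_lie (LieSubmodule.mem_top x) hd
  rw [show D = ⁅(⊤ : LieIdeal R L), (⊤ : LieIdeal R L)⁆ from rfl, LieSubmodule.lie_le_iff]
  rintro a - b -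
  obtain ⟨d, hd, c, rfl⟩ := hdecomp b
  rw [lie_add, lie_smul]
  exact add_mem (LieSubmodule.lie_mem_lie (LieSubmodule.mem_top a) hd)
    (Submodule.smul_mem _ c (hx_lie a))

theorem lowerCentralSeries_one_sup_span_singleton_ne_top {K L : Type*} [Field K] [LieRing L]
    [LieAlgebra K L] [LieRing.IsNilpotent L] (h : 2 ≤ finrank K L) (x : L) :
    (lowerCentralSeries K L L 1).toSubmodule ⊔ Submodule.span K {x} ≠ ⊤ := by
  intro hx
  have hD : lowerCentralSeries K L L 1 = ⊥ :=
    eq_bot_of_le_lie_top (lowerCentralSeries_one_le_lie_of_sup_span_eq_top hx)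
  rw [hD, LieSubmodule.bot_toSubmodule, bot_sup_eq] at hx
  have hspan : finrank K (Submodule.span K {x}) ≤ 1 :=
    (finrank_span_le_card ({x} : Set L)).trans (by simp)
  rw [hx, finrank_top] at hspan
  omega

end LieAlgebra

theorem approx_by_elements_of_distinct_codim_one_ideals_general
    (g : Type*) [LieRing g] [LieAlgebra ℝ g] [FiniteDimensional ℝ g]
    [LieRing.IsNilpotent g]
    (hdim : 2 ≤ Module.finrank ℝ g)
    (N : g → ℝ)
    (hN₁ : ∀ (a : ℝ) (x : g), N (a • x) = |a| * N x)
    (X : g) :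
    ∃ (Y : ℕ → g) (h : ℕ → LieIdeal ℝ g),
      (∀ ε : ℝ, 0 < ε → ∃ K : ℕ, ∀ k ≥ K, N (Y k - X) < ε) ∧
      Function.Injective h ∧
      (∀ k, Module.finrank ℝ (h k) = Module.finrank ℝ g - 1) ∧
      (∀ k, Y k ∈ h k) := by
  obtain ⟨ψ, φ, e, hψ, hφ, hψe, hφ0⟩ := Dual.exists_pair_of_sup_span_singleton_ne_top
    (LieAlgebra.lowerCentralSeries_one_sup_span_singleton_ne_top hdim) X
  have hψX : ψ X = 0 := hψ (Submodule.mem_sup_right (Submodule.mem_span_singleton_self X))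
  have hφe : φ e = 0 := hφ (Submodule.mem_sup_right (Submodule.mem_span_singleton_self e))
  let f (t : ℝ) : Dual ℝ g := ψ + t • φ
  have hfe (t : ℝ) : f t e = 1 := by simp [f, hψe, hφe]
  have hD (t : ℝ) : (lowerCentralSeries ℝ g g 1).toSubmodule ≤ ker (f t) := fun y hy => by
    have hψy : ψ y = 0 := hψ (Submodule.mem_sup_left hy)
    have hφy : φ y = 0 := hφ (Submodule.mem_sup_left hy)
    simp [f, hψy, hφy]
  let t (k : ℕ) : ℝ := 1 / ((k : ℝ) + 1)
  let I (k : ℕ) : LieIdeal ℝ g :=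
    LieAlgebra.idealOfLowerCentralSeriesOneLE (ker (f (t k))) (hD (t k))
  refine ⟨fun k => X - f (t k) X • e, I, ?_, ?_, fun k => ?_, fun k => ?_⟩
  · have hc : Tendsto (fun k => -f (t k) X) atTop (𝓝 0) := by
      have := (tendsto_one_div_add_atTop_nhds_zero_nat.mul_const (φ X)).neg
      simpa [f, t, hψX] using this
    simpa [neg_smul] using exists_forall_ge_apply_smul_lt hN₁ hc e
  · intro k₁ k₂ hk
    exact Nat.injective_one_div_cast_add_one
      (Dual.injective_ker_add_smul hψe hφe hφ0 (congrArg LieSubmodule.toSubmodule hk))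
  · have hf0 : f (t k) ≠ 0 := fun h0 => by simpa [h0] using hfe (t k)
    exact Nat.eq_sub_of_add_eq (Dual.finrank_ker_add_one_of_ne_zero hf0)
  · exact sub_apply_smul_mem_ker (hfe (t k)) X

/-- In a finite-dimensional nilpotent real Lie algebra of dimension at least 2,
equipped with a norm `N` making it a normed real vector space, every element `X`
is the limit of a sequence `Yₖ` such that each `Yₖ` lies in a codimension-one
Lie ideal `𝔥ₖ`, the ideals `𝔥ₖ` being pairwise distinct. -/
theorem approx_by_elements_of_distinct_codim_one_ideals
    (g : Type*) [LieRing g] [LieAlgebra ℝ g] [FiniteDimensional ℝ g]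
    [LieRing.IsNilpotent g]
    (hdim : 2 ≤ Module.finrank ℝ g)
    (N : g → ℝ)
    (hN₀ : ∀ x : g, N x = 0 ↔ x = 0)
    (hN₁ : ∀ (a : ℝ) (x : g), N (a • x) = |a| * N x)
    (hN₂ : ∀ x y : g, N (x + y) ≤ N x + N y)
    (X : g) :
    ∃ (Y : ℕ → g) (h : ℕ → LieIdeal ℝ g),
      (∀ ε : ℝ, 0 < ε → ∃ K : ℕ, ∀ k ≥ K, N (Y k - X) < ε) ∧
      Function.Injective h ∧
      (∀ k, Module.finrank ℝ (h k) = Module.finrank ℝ g - 1) ∧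
      (∀ k, Y k ∈ h k) :=
  approx_by_elements_of_distinct_codim_one_ideals_general g hdim N hN₁ X
end

section
/- Let M be a metric space and Φ a flow on M. Let V ⊆ M be an open set with compact closure, and assume that every point x in the closure of V satisfying Φ(t, x) = x for all t ∈ ℝ actually lies in V (that is, the frontier of V contains no fixed point of the flow). Then there exists τ > 0 such that for every t with 0 < t ≤ τ, the set {x ∈ V : Φ(t, x) = x} is compact. -/
/-!
A frontier point `x` of `V` is not a fixed point of the flow. If points `x' → x` were fixed by
`Φ t'` with `t' → 0⁺`, they would also be fixed by `Φ (⌊s / t'⌋ t')` for every `s`, and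
`⌊s / t'⌋ t' → s` would force `Φ s x = x`. By compactness of the frontier there is therefore a
`τ > 0` such that no frontier point is fixed by `Φ t` for `0 < t ≤ τ`; for such `t` the fixed
points of `Φ t` in `V` are all its fixed points in `closure V`, a closed subset of a compact set.
-/

open Set Filter Topology Function

lemma tendsto_floor_div_zsmul_nhdsGT_zero (s : ℝ) :
    Tendsto (fun t : ℝ => ⌊s / t⌋ • t) (𝓝[>] 0) (𝓝 s) := by
  have hlower : Tendsto (fun t : ℝ => s - t) (𝓝[>] 0) (𝓝 s) := by
    simpa using (tendsto_const_nhds.sub tendsto_id).mono_left (nhdsWithin_le_nhds (a := (0 : ℝ)))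
  refine tendsto_of_tendsto_of_tendsto_of_le_of_le' hlower tendsto_const_nhds ?_ ?_ <;>
    filter_upwards [self_mem_nhdsWithin] with t (ht : 0 < t) <;> rw [zsmul_eq_mul]
  · have := Int.lt_floor_add_one (s / t)
    rw [div_lt_iff₀ ht] at this
    linarith
  · exact (le_div_iff₀ ht).1 (Int.floor_le _)

lemma isCompact_inter_fixedPoints_of_frontier {X : Type*} [TopologicalSpace X] [T2Space X]
    {f : X → X} (hf : Continuous f) {V : Set X} (hV : IsCompact (closure V))
    (h : ∀ x ∈ frontier V, f x ≠ x) : IsCompact (V ∩ fixedPoints f) := by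
  have hclosure : V ∩ fixedPoints f = closure V ∩ fixedPoints f := by
    refine (inter_subset_inter_left _ subset_closure).antisymm fun x ⟨hxc, hxf⟩ => ⟨?_, hxf⟩
    by_contra hxV
    exact h x ⟨hxc, fun hxi => hxV (interior_subset hxi)⟩ hxf
  rw [hclosure]
  exact hV.inter_right (isClosed_fixedPoints hf)

namespace Flow

lemma map_zsmul_of_map_eq {τ M : Type*} [AddGroup τ] [TopologicalSpace τ] [ContinuousAdd τ]
    [TopologicalSpace M] (Φ : Flow τ M) {t : τ} {x : M} (h : Φ t x = x) (k : ℤ) :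
    Φ (k • t) x = x :=
  zsmul_mem (K := @AddAction.stabilizer τ M _ Φ.toAddAction x) (x := t) h k

variable {M : Type*} [TopologicalSpace M] [T2Space M] (Φ : Flow ℝ M)

lemma map_eq_of_frequently_map_eq {p : M} (hp : ∃ᶠ z in 𝓝[>] 0 ×ˢ 𝓝 p, Φ z.1 z.2 = z.2)
    (s : ℝ) : Φ s p = p := by
  have hpair : Tendsto (fun z : ℝ × M => (⌊s / z.1⌋ • z.1, z.2)) (𝓝[>] 0 ×ˢ 𝓝 p) (𝓝 (s, p)) :=
    ((tendsto_floor_div_zsmul_nhdsGT_zero s).comp tendsto_fst).prodMk_nhds tendsto_snd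
  have hlim := (Φ.cont'.tendsto (s, p)).comp hpair
  exact tendsto_nhds_unique_of_frequently_eq hlim tendsto_snd
    (hp.mono fun z hz => Φ.map_zsmul_of_map_eq hz _)

lemma eventually_forall_map_ne_of_isCompact {K : Set M} (hK : IsCompact K)
    (hnotfix : ∀ x ∈ K, ¬ ∀ t, Φ t x = x) : ∀ᶠ t in 𝓝[>] 0, ∀ x ∈ K, Φ t x ≠ x := by
  have hlocal : ∀ p ∈ K, ∀ᶠ z in 𝓝[>] 0 ×ˢ 𝓝 p, Φ z.1 z.2 ≠ z.2 := fun p hp =>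
    not_frequently.1 fun hfreq => hnotfix p hp (Φ.map_eq_of_frequently_map_eq hfreq)
  exact Eventually.curry (hK.mem_prod_nhdsSet_of_forall hlocal) |>.mono fun _ ht => ht.self_of_nhdsSet

end Flow

/-- Let `Φ` be a flow on a metric space `M` and let `V` be an open set with
compact closure whose frontier contains no fixed point of the flow (every
fixed point in the closure of `V` lies in `V`).  Then there is `τ > 0` such
that for every `t` with `0 < t ≤ τ` the set of fixed points of `Φ t` in `V`
is compact. -/
theorem flow_exists_tau_fixedPoints_compact
    (M : Type*) [MetricSpace M] (Φ : Flow ℝ M)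
    (V : Set M) (hV : IsOpen V) (hVc : IsCompact (closure V))
    (hiso : ∀ x ∈ closure V, (∀ t : ℝ, Φ t x = x) → x ∈ V) :
    ∃ τ : ℝ, 0 < τ ∧ ∀ t : ℝ, 0 < t → t ≤ τ →
      IsCompact {x ∈ V | Φ t x = x} := by
  have hfrontier : ∀ x ∈ frontier V, ¬ ∀ t, Φ t x = x := fun x hx hfix =>
    (hV.frontier_eq ▸ hx).2 (hiso x (frontier_subset_closure hx) hfix)
  have hsmall := Φ.eventually_forall_map_ne_of_isCompact
    (hVc.of_isClosed_subset isClosed_frontier frontier_subset_closure) hfrontier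
  obtain ⟨τ, hτ, hsub⟩ := mem_nhdsGT_iff_exists_Ioc_subset.1 hsmall
  exact ⟨τ, hτ, fun t ht htτ =>
    isCompact_inter_fixedPoints_of_frontier (Φ.continuous_toFun t) hVc (hsub ⟨ht, htτ⟩)⟩
end

section
/- Let M be a Hausdorff topological space and Φ a flow on M. Suppose (tₖ)ₖ∈ℕ is a sequence of positive real numbers with tₖ → 0, and (pₖ)ₖ∈ℕ is a sequence in M converging to a point q such that Φ(tₖ, pₖ) = pₖ for every k. Then q is a fixed point of the flow: Φ(s, q) = q for all s ∈ ℝ. -/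
/-!
Each `pₖ` is fixed by `Φ (n * tₖ)` for every integer `n`. Since the period `tₖ` tends to `0`,
`⌊s / tₖ⌋ * tₖ → s`, so by joint continuity `pₖ = Φ (⌊s / tₖ⌋ * tₖ) pₖ → Φ s q`, while `pₖ → q`.
-/

open Filter Topology

theorem Flow.map_zsmul_eq_self_of_map_eq_self {τ α : Type*} [TopologicalSpace τ] [AddGroup τ]
    [ContinuousAdd τ] [TopologicalSpace α] (ϕ : Flow τ α) {c : τ} {x : α} (h : ϕ c x = x)
    (n : ℤ) : ϕ (n • c) x = x :=
  letI := ϕ.toAddAction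
  AddAction.mem_stabilizer_iff.mp <| zsmul_mem (AddAction.mem_stabilizer_iff.mpr h :
    c ∈ AddAction.stabilizer τ x) n

theorem tendsto_floor_div_mul {K ι : Type*} [Field K] [LinearOrder K] [IsStrictOrderedRing K]
    [FloorRing K] [TopologicalSpace K] [OrderTopology K] {l : Filter ι} {t : ι → K}
    (ht_pos : ∀ i, 0 < t i) (ht : Tendsto t l (𝓝 0)) (s : K) :
    Tendsto (fun i ↦ (⌊s / t i⌋ : K) * t i) l (𝓝 s) := by
  have hlower : Tendsto (fun i ↦ s - t i) l (𝓝 s) := by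
    simpa using tendsto_const_nhds.sub ht
  refine tendsto_of_tendsto_of_tendsto_of_le_of_le hlower tendsto_const_nhds (fun i ↦ ?_)
    (fun i ↦ ?_)
  · linarith [Int.sub_floor_div_mul_lt s (ht_pos i)]
  · linarith [Int.sub_floor_div_mul_nonneg s (ht_pos i)]

/-- If `tₖ → 0` is a sequence of positive times, `pₖ → q`, and each `pₖ` is
fixed by the time-`tₖ` map of a flow on a Hausdorff space, then `q` is a fixed
point of the flow. -/
theorem limit_of_periodic_points_is_fixed
    (M : Type*) [TopologicalSpace M] [T2Space M] (Φ : Flow ℝ M)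
    (t : ℕ → ℝ) (ht_pos : ∀ k, 0 < t k) (ht : Tendsto t atTop (𝓝 0))
    (p : ℕ → M) (q : M) (hp : Tendsto p atTop (𝓝 q))
    (hfix : ∀ k, Φ (t k) (p k) = p k) :
    ∀ s : ℝ, Φ s q = q := by
  intro s
  have hΦ : Tendsto (fun k ↦ Φ ((⌊s / t k⌋ : ℝ) * t k) (p k)) atTop (𝓝 (Φ s q)) :=
    (Φ.cont'.tendsto (s, q)).comp ((tendsto_floor_div_mul ht_pos ht s).prodMk_nhds hp)
  have hperiodic : (fun k ↦ Φ ((⌊s / t k⌋ : ℝ) * t k) (p k)) = p := funext fun k ↦ by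
    rw [← zsmul_eq_mul, Φ.map_zsmul_eq_self_of_map_eq_self (hfix k)]
  rw [hperiodic] at hΦ
  exact tendsto_nhds_unique hΦ hp
end

section
/- Let G be a Lie group modeled on a finite-dimensional real normed space. Then there exists a neighborhood U of the identity element of G such that every g ∈ U lies on a one-parameter subgroup: for each g ∈ U there is a continuous group homomorphism X : (ℝ, +) → G with X(1) = g. -/
/-!
In a chart `Θ` centred at `1`, the group law becomes a smooth map `q` with
`q a b = a + b + O(‖a‖ ‖b‖)`. By the inverse function theorem `q (s, s) = y` can be solved for
`s ≈ y / 2`, so every `g = Θ w` close to `1` has iterated square roots `g ^ (1 / 2 ^ n)` with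
coordinates of size `O(‖w‖ / 2 ^ n)`. The powers `g ^ (m / 2 ^ n)`, `m ≤ 2 ^ n`, then have
coordinates depending Lipschitz-continuously on the dyadic exponent, so they extend to a
continuous local homomorphism `[0, 1] → G`, which extends to a one-parameter subgroup
`t ↦ (g ^ (t / n)) ^ n`.
-/

open scoped Manifold
open Filter Metric Set Topology

section Calculus

variable {E F H : Type*} [NormedAddCommGroup E] [NormedSpace ℝ E] [NormedAddCommGroup F]
  [NormedSpace ℝ F] [NormedAddCommGroup H] [NormedSpace ℝ H]

/- For fixed `a`, the partial derivative `d₂f (a, ·)` vanishes at `a = 0` and is Lipschitz in `a`,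
so it has norm `O(‖a‖)`; the mean value inequality in the second variable then gives
`‖f (a, b)‖ = ‖f (a, b) - f (a, 0)‖ = O(‖a‖ ‖b‖)`. -/
theorem exists_eventually_norm_le_mul_norm_mul_norm {f : E × F → H} (hf : ContDiffAt ℝ 2 f 0)
    (h₁ : ∀ᶠ a in 𝓝 0, f (a, 0) = 0) (h₂ : ∀ᶠ b in 𝓝 0, f (0, b) = 0) :
    ∃ L, 0 ≤ L ∧ ∀ᶠ p in 𝓝 (0 : E × F), ‖f p‖ ≤ L * ‖p.1‖ * ‖p.2‖ := by
  obtain ⟨K, s, hs, hK⟩ := (hf.fderiv_right (m := 1) le_rfl).exists_lipschitzOnWith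
  have hdiff : ∀ᶠ p in 𝓝 (0 : E × F), DifferentiableAt ℝ f p :=
    (hf.eventually (by simp)).mono fun p hp => hp.differentiableAt (by simp)
  have h₁' : ∀ᶠ p in 𝓝 (0 : E × F), f (p.1, 0) = 0 :=
    (continuous_fst.tendsto' (0 : E × F) 0 rfl).eventually h₁
  have h₂' : ∀ᶠ p in 𝓝 (0 : E × F), f (0, p.2) = 0 :=
    (continuous_snd.tendsto' (0 : E × F) 0 rfl).eventually h₂
  obtain ⟨r, hr, hball⟩ := Metric.mem_nhds_iff.mp (inter_mem hs (hdiff.and (h₁'.and h₂')))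
  have mem_ball_iff (a : E) (b : F) : (a, b) ∈ ball (0 : E × F) r ↔ ‖a‖ < r ∧ ‖b‖ < r := by
    simp [Prod.norm_def]
  refine ⟨K, K.2, Metric.eventually_nhds_iff_ball.mpr ⟨r, hr, fun ⟨a, b⟩ hab => ?_⟩⟩
  obtain ⟨ha, hb⟩ := (mem_ball_iff a b).mp hab
  set d₂f : F → F →L[ℝ] H := fun y => fderiv ℝ f (a, y) ∘L ContinuousLinearMap.inr ℝ E F
  have hderiv : ∀ y ∈ ball (0 : F) r, HasFDerivAt (fun y => f (a, y)) (d₂f y) y := fun y hy =>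
    ((hball ((mem_ball_iff a y).mpr ⟨ha, mem_ball_zero_iff.mp hy⟩)).2.1.hasFDerivAt).comp y
      (hasFDerivAt_prodMk_right a y)
  have hzero : ∀ y ∈ ball (0 : F) r, fderiv ℝ f (0, y) ∘L ContinuousLinearMap.inr ℝ E F = 0 := by
    intro y hy
    have hy' : ‖y‖ < r := mem_ball_zero_iff.mp hy
    refine (((hball ((mem_ball_iff 0 y).mpr ⟨by simpa using hr, hy'⟩)).2.1.hasFDerivAt).comp y
      (hasFDerivAt_prodMk_right 0 y)).unique ((hasFDerivAt_const 0 y).congr_of_eventuallyEq ?_)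
    filter_upwards [isOpen_ball.mem_nhds hy] with z hz
    exact ((hball ((mem_ball_iff 0 z).mpr ⟨by simpa using hr, mem_ball_zero_iff.mp hz⟩)).2.2.2)
  have hbound : ∀ y ∈ ball (0 : F) r, ‖d₂f y‖ ≤ K * ‖a‖ := by
    intro y hy
    have hy' : ‖y‖ < r := mem_ball_zero_iff.mp hy
    calc ‖d₂f y‖ = ‖(fderiv ℝ f (a, y) - fderiv ℝ f (0, y)) ∘L ContinuousLinearMap.inr ℝ E F‖ := by
          rw [ContinuousLinearMap.sub_comp, hzero y hy, sub_zero]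
      _ ≤ ‖fderiv ℝ f (a, y) - fderiv ℝ f (0, y)‖ :=
          by grw [ContinuousLinearMap.opNorm_comp_le, ContinuousLinearMap.norm_inr_le_one, mul_one]
      _ ≤ K * ‖a‖ := by
          have := hK.norm_sub_le (hball ((mem_ball_iff a y).mpr ⟨ha, hy'⟩)).1
            (hball ((mem_ball_iff 0 y).mpr ⟨by simpa using hr, hy'⟩)).1
          simpa [Prod.norm_def] using this
  have := (convex_ball (0 : F) r).norm_image_sub_le_of_norm_hasFDerivWithin_le
    (fun y hy => (hderiv y hy).hasFDerivWithinAt) hbound (mem_ball_self hr)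
    (mem_ball_zero_iff.mpr hb)
  simpa [(hball hab).2.2.1] using this

theorem hasStrictFDerivAt_apply_diag {q : E × E → E} (hq : ContDiffAt ℝ 1 q 0)
    (h₁ : ∀ᶠ a in 𝓝 0, q (a, 0) = a) (h₂ : ∀ᶠ b in 𝓝 0, q (0, b) = b) :
    HasStrictFDerivAt (fun y : E => q (y, y)) ((2 : ℝ) • ContinuousLinearMap.id ℝ E) 0 := by
  set D := fderiv ℝ q 0
  have hqD : HasFDerivAt q D 0 := (hq.differentiableAt one_ne_zero).hasFDerivAt
  have hD₁ : D ∘L ContinuousLinearMap.inl ℝ E E = ContinuousLinearMap.id ℝ E :=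
    (hqD.comp (f := fun a : E => (a, (0 : E))) 0 (hasFDerivAt_prodMk_left 0 0)).unique
      ((hasFDerivAt_id 0).congr_of_eventuallyEq h₁)
  have hD₂ : D ∘L ContinuousLinearMap.inr ℝ E E = ContinuousLinearMap.id ℝ E :=
    (hqD.comp (f := fun b : E => ((0 : E), b)) 0 (hasFDerivAt_prodMk_right 0 0)).unique
      ((hasFDerivAt_id 0).congr_of_eventuallyEq h₂)
  refine ((hq.hasStrictFDerivAt one_ne_zero).comp (f := fun y : E => (y, y)) (0 : E)
    ((hasStrictFDerivAt_id (0 : E)).prodMk (hasStrictFDerivAt_id (0 : E)))).congr_fderiv ?_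
  ext y
  have hy : D (y, 0) + D (0, y) = y + y := by simpa using congr($hD₁ y + $hD₂ y)
  rw [← map_add, Prod.mk_add_mk, add_zero, zero_add] at hy
  simpa [two_smul] using hy

/- The local inverse of `y ↦ q (y, y)` at `0` is a square root for the law `q`; it is
`1`-Lipschitz near `0` because its derivative `2⁻¹ • id` has norm `< 1`. -/
theorem exists_eventually_sqrt [CompleteSpace E] {q : E × E → E} (hq : ContDiffAt ℝ 1 q 0)
    (h₁ : ∀ᶠ a in 𝓝 0, q (a, 0) = a) (h₂ : ∀ᶠ b in 𝓝 0, q (0, b) = b) :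
    ∃ sqrt : E → E, ∀ᶠ y in 𝓝 0, q (sqrt y, sqrt y) = y ∧ ‖sqrt y‖ ≤ ‖y‖ := by
  set two : E ≃L[ℝ] E := ContinuousLinearEquiv.smulLeft (Units.mk0 (2 : ℝ) two_ne_zero)
  have hdiag : HasStrictFDerivAt (fun y : E => q (y, y)) (two : E →L[ℝ] E) 0 :=
    (hasStrictFDerivAt_apply_diag hq h₁ h₂).congr_fderiv (by ext; simp [two])
  have hq0 : q (0, 0) = 0 := h₁.self_of_nhds
  have hsqrt0 : hdiag.localInverse _ _ _ 0 = 0 := by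
    simpa [hq0] using hdiag.localInverse_apply_image
  have hnorm : ‖(two.symm : E →L[ℝ] E)‖₊ < 1 := by
    rw [← NNReal.coe_lt_coe, coe_nnnorm]
    refine (ContinuousLinearMap.opNorm_le_bound _ (by norm_num : (0 : ℝ) ≤ 2⁻¹)
      fun y => ?_).trans_lt (by norm_num)
    have : two.symm y = (2⁻¹ : ℝ) • y := two.symm_apply_eq.mpr (by simp [two, smul_smul])
    simp [this, norm_smul]
  obtain ⟨s, hs, hlip⟩ := hdiag.to_localInverse.exists_lipschitzOnWith_of_nnnorm_lt 1 hnorm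
  rw [hq0] at hs
  refine ⟨hdiag.localInverse _ _ _, ?_⟩
  filter_upwards [hs, hq0 ▸ hdiag.eventually_right_inverse] with y hy hyq
  refine ⟨hyq, ?_⟩
  have := hlip.norm_sub_le hy (mem_of_mem_nhds hs)
  rwa [hsqrt0, sub_zero, sub_zero, NNReal.coe_one, one_mul] at this

end Calculus

/- Since `x n ≤ (3 / 4) ^ n * x 0`, the accumulated factor `∏ (1 + c * x k)` stays below `2`. -/
theorem two_pow_mul_le_of_le_half_mul {x : ℕ → ℝ} {c : ℝ} (hx : ∀ n, 0 ≤ x n) (hc : 0 ≤ c)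
    (hcx : c * x 0 ≤ 1 / 8) (hstep : ∀ n, x (n + 1) ≤ x n / 2 * (1 + c * x n)) (n : ℕ) :
    2 ^ n * x n ≤ 2 * x 0 := by
  have key : ∀ n, x n ≤ (3 / 4) ^ n * x 0 ∧ 2 ^ n * x n ≤ (2 - (3 / 4) ^ n) * x 0 := by
    intro n
    induction n with
    | zero => norm_num
    | succ n ih =>
      have hr : (0 : ℝ) ≤ (3 / 4) ^ n := by positivity
      have hr1 : ((3 : ℝ) / 4) ^ n ≤ 1 := pow_le_one₀ (by norm_num) (by norm_num)
      have hcxn : c * x n ≤ (3 / 4) ^ n / 8 := by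
        calc c * x n ≤ c * ((3 / 4) ^ n * x 0) := mul_le_mul_of_nonneg_left ih.1 hc
          _ = (3 / 4) ^ n * (c * x 0) := by ring
          _ ≤ (3 / 4) ^ n / 8 := by nlinarith
      have h2n : (0 : ℝ) ≤ 2 ^ n := by positivity
      have hxn := hx n
      have hx0 := hx 0
      constructor
      · calc x (n + 1) ≤ x n / 2 * (1 + c * x n) := hstep n
          _ ≤ x n / 2 * (1 + 1 / 8) := by gcongr; linarith
          _ ≤ 3 / 4 * x n := by linarith
          _ ≤ (3 / 4) ^ (n + 1) * x 0 := by rw [pow_succ]; nlinarith [ih.1]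
      · calc 2 ^ (n + 1) * x (n + 1) ≤ 2 ^ n * x n * (1 + c * x n) := by
              rw [pow_succ]; nlinarith [hstep n, mul_nonneg h2n hxn]
          _ ≤ (2 - (3 / 4) ^ n) * x 0 * (1 + (3 / 4) ^ n / 8) := by
              exact mul_le_mul ih.2 (by linarith) (by positivity) (by nlinarith)
          _ ≤ (2 - (3 / 4) ^ (n + 1)) * x 0 := by
              rw [pow_succ]; nlinarith [mul_nonneg (mul_nonneg hr hr) hx0]
  exact (key n).2.trans (by nlinarith [hx 0, (by positivity : (0 : ℝ) ≤ (3 / 4) ^ n)])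

section DyadicLimit

variable {X : Type*} [MetricSpace X]

theorem natFloor_two_pow_mul_le {t : ℝ} (ht : t ≤ 1) (n : ℕ) : ⌊(2 : ℝ) ^ n * t⌋₊ ≤ 2 ^ n :=
  Nat.floor_le_of_le (by simpa using mul_le_of_le_one_right (by positivity : (0 : ℝ) ≤ 2 ^ n) ht)

theorem abs_natFloor_sub_le {x : ℝ} (hx : 0 ≤ x) : |(⌊x⌋₊ : ℝ) - x| ≤ 1 := by
  rw [abs_sub_comm, abs_le]
  constructor <;> linarith [Nat.floor_le hx, Nat.sub_one_lt_floor x]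

theorem tendsto_div_two_pow (c : ℝ) : Tendsto (fun n : ℕ => c / 2 ^ n) atTop (𝓝 0) :=
  tendsto_const_nhds.div_atTop (tendsto_pow_atTop_atTop_of_one_lt one_lt_two)

/-- `V n m` plays the role of the value at the dyadic point `m / 2 ^ n` of a `K`-Lipschitz
function on `[0, 1]`. -/
structure DyadicLipschitz (V : ℕ → ℕ → X) (K : ℝ) : Prop where
  two_mul : ∀ n m, m ≤ 2 ^ n → V (n + 1) (2 * m) = V n m
  dist_le : ∀ n a b, a ≤ 2 ^ n → b ≤ 2 ^ n → dist (V n a) (V n b) ≤ K * |(a : ℝ) - b| / 2 ^ n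

noncomputable def dyadicLimit [Nonempty X] (V : ℕ → ℕ → X) (t : ℝ) : X :=
  limUnder atTop fun n => V n ⌊(2 : ℝ) ^ n * t⌋₊

namespace DyadicLipschitz

variable {V : ℕ → ℕ → X} {K : ℝ} {s t : ℝ}

theorem nonneg (h : DyadicLipschitz V K) : 0 ≤ K := by
  simpa using dist_nonneg.trans (h.dist_le 0 0 1 (by simp) (by simp))

theorem dist_le_of_abs_sub_le (h : DyadicLipschitz V K) {n a b : ℕ} (ha : a ≤ 2 ^ n)
    (hb : b ≤ 2 ^ n) {x α β : ℝ} (hax : |(a : ℝ) - x| ≤ α) (hbx : |(b : ℝ) - x| ≤ β) :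
    dist (V n a) (V n b) ≤ K * (α + β) / 2 ^ n := by
  refine (h.dist_le n a b ha hb).trans (div_le_div_of_nonneg_right ?_ (by positivity))
  exact mul_le_mul_of_nonneg_left ((abs_sub_le _ x _).trans (by rw [abs_sub_comm x]; linarith))
    h.nonneg

theorem dist_succ_le (h : DyadicLipschitz V K) (ht : t ∈ Icc (0 : ℝ) 1) (n : ℕ) :
    dist (V n ⌊(2 : ℝ) ^ n * t⌋₊) (V (n + 1) ⌊(2 : ℝ) ^ (n + 1) * t⌋₊) ≤ 3 * K / 2 / 2 ^ n := by
  have hA := natFloor_two_pow_mul_le ht.2 n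
  have h2A : |((2 * ⌊(2 : ℝ) ^ n * t⌋₊ : ℕ) : ℝ) - 2 ^ (n + 1) * t| ≤ 2 := by
    rw [Nat.cast_mul, Nat.cast_two, pow_succ, mul_comm _ (2 : ℝ), mul_assoc, ← mul_sub, abs_mul,
      abs_two]
    linarith [abs_natFloor_sub_le (show 0 ≤ (2 : ℝ) ^ n * t by have := ht.1; positivity)]
  rw [← h.two_mul n _ hA]
  refine (h.dist_le_of_abs_sub_le (by rw [pow_succ]; omega) (natFloor_two_pow_mul_le ht.2 _) h2A
    (abs_natFloor_sub_le (by have := ht.1; positivity))).trans (le_of_eq ?_)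
  rw [pow_succ]
  ring

variable [Nonempty X] [CompleteSpace X]

theorem tendsto_dyadicLimit (h : DyadicLipschitz V K) (ht : t ∈ Icc (0 : ℝ) 1) :
    Tendsto (fun n => V n ⌊(2 : ℝ) ^ n * t⌋₊) atTop (𝓝 (dyadicLimit V t)) :=
  (cauchySeq_of_le_geometric_two (h.dist_succ_le ht)).tendsto_limUnder

theorem dist_dyadicLimit_le (h : DyadicLipschitz V K) (ht : t ∈ Icc (0 : ℝ) 1) {n m : ℕ}
    (hm : m ≤ 2 ^ n) :
    dist (V n m) (dyadicLimit V t) ≤ K * (|(m : ℝ) - 2 ^ n * t| + 4) / 2 ^ n := by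
  have hfloor :=
    dist_le_of_le_geometric_two_of_tendsto (h.dist_succ_le ht) (h.tendsto_dyadicLimit ht) n
  refine (dist_triangle _ (V n ⌊(2 : ℝ) ^ n * t⌋₊) _).trans ?_
  refine (add_le_add (h.dist_le_of_abs_sub_le hm (natFloor_two_pow_mul_le ht.2 n) le_rfl
    (abs_natFloor_sub_le (by have := ht.1; positivity))) hfloor).trans (le_of_eq ?_)
  ring

theorem tendsto_of_abs_sub_le (h : DyadicLipschitz V K) (ht : t ∈ Icc (0 : ℝ) 1) {m : ℕ → ℕ}
    (hm : ∀ n, m n ≤ 2 ^ n) {c : ℝ} (hc : ∀ n, |(m n : ℝ) - 2 ^ n * t| ≤ c) :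
    Tendsto (fun n => V n (m n)) atTop (𝓝 (dyadicLimit V t)) := by
  refine tendsto_iff_dist_tendsto_zero.mpr (squeeze_zero (fun n => dist_nonneg)
    (g := fun n => K * (c + 4) / 2 ^ n) (fun n => (h.dist_dyadicLimit_le ht (hm n)).trans ?_)
    (tendsto_div_two_pow _))
  exact div_le_div_of_nonneg_right (mul_le_mul_of_nonneg_left (by linarith [hc n]) h.nonneg)
    (by positivity)

theorem dist_dyadicLimit_dyadicLimit_le (h : DyadicLipschitz V K) (hs : s ∈ Icc (0 : ℝ) 1)
    (ht : t ∈ Icc (0 : ℝ) 1) : dist (dyadicLimit V s) (dyadicLimit V t) ≤ K * |s - t| := by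
  have hlim : Tendsto (fun n : ℕ => K * |s - t| + 10 * K / 2 ^ n) atTop (𝓝 (K * |s - t|)) := by
    simpa using tendsto_const_nhds.add (tendsto_div_two_pow (10 * K))
  refine ge_of_tendsto' hlim fun n => ?_
  set A := ⌊(2 : ℝ) ^ n * s⌋₊
  have hA := natFloor_two_pow_mul_le hs.2 n
  have hAs : |(A : ℝ) - 2 ^ n * s| ≤ 1 := abs_natFloor_sub_le (by have := hs.1; positivity)
  have hAt : |(A : ℝ) - 2 ^ n * t| ≤ 2 ^ n * |s - t| + 1 := by
    calc |(A : ℝ) - 2 ^ n * t| ≤ |(A : ℝ) - 2 ^ n * s| + |2 ^ n * s - 2 ^ n * t| :=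
          abs_sub_le _ _ _
      _ ≤ 2 ^ n * |s - t| + 1 := by
        rw [← mul_sub, abs_mul, abs_of_pos (by positivity : (0 : ℝ) < 2 ^ n)]; linarith
  calc dist (dyadicLimit V s) (dyadicLimit V t)
      ≤ dist (V n A) (dyadicLimit V s) + dist (V n A) (dyadicLimit V t) := dist_triangle_left _ _ _
    _ ≤ K * (1 + 4) / 2 ^ n + K * (2 ^ n * |s - t| + 1 + 4) / 2 ^ n := by
        have hK := h.nonneg
        refine add_le_add ((h.dist_dyadicLimit_le hs hA).trans ?_)
          ((h.dist_dyadicLimit_le ht hA).trans ?_) <;> gcongr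
    _ = K * |s - t| + 10 * K / 2 ^ n := by field_simp; ring

theorem continuousOn (h : DyadicLipschitz V K) : ContinuousOn (dyadicLimit V) (Icc 0 1) :=
  (LipschitzOnWith.of_dist_le' fun s hs t ht => by
    simpa [Real.dist_eq] using h.dist_dyadicLimit_dyadicLimit_le hs ht).continuousOn

end DyadicLipschitz

end DyadicLimit

/-- Coordinates `toFun : E → G` around `1` in which, on the closed ball of radius `radius`, the
group law is `mul a b = a + b + O(‖a‖ ‖b‖)` and every point has a square root `sqrt`. -/
structure LocalGroupChart (E G : Type*) [NormedAddCommGroup E] [Group G] [TopologicalSpace G] where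
  toFun : E → G
  mul : E → E → E
  sqrt : E → E
  radius : ℝ
  lip : ℝ
  radius_pos : 0 < radius
  lip_nonneg : 0 ≤ lip
  lip_mul_radius_le : lip * radius ≤ 1 / 2
  toFun_mul : ∀ a b, ‖a‖ ≤ radius → ‖b‖ ≤ radius → toFun (mul a b) = toFun a * toFun b
  norm_mul_sub_sub_le : ∀ a b, ‖a‖ ≤ radius → ‖b‖ ≤ radius → ‖mul a b - a - b‖ ≤ lip * ‖a‖ * ‖b‖
  mul_sqrt_self : ∀ y, ‖y‖ ≤ radius → mul (sqrt y) (sqrt y) = y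
  norm_sqrt_le : ∀ y, ‖y‖ ≤ radius → ‖sqrt y‖ ≤ ‖y‖
  injOn_toFun : InjOn toFun (closedBall 0 radius)
  continuousOn_toFun : ContinuousOn toFun (closedBall 0 radius)
  continuousAt_mul : ∀ a b, ‖a‖ ≤ radius → ‖b‖ ≤ radius →
    ContinuousAt (fun p : E × E => mul p.1 p.2) (a, b)

namespace LocalGroupChart

variable {E G : Type*} [NormedAddCommGroup E] [Group G] [TopologicalSpace G]
  (C : LocalGroupChart E G) {a b w y : E}

theorem exists_of_eventually (Θ : E → G) (q : E × E → E) (sqrt : E → E) {L : ℝ} (hL : 0 ≤ L)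
    (hinj : ∃ s ∈ 𝓝 (0 : E), InjOn Θ s)
    (h : ∀ᶠ p in 𝓝 (0 : E × E), Θ (q p) = Θ p.1 * Θ p.2 ∧
      ‖q p - p.1 - p.2‖ ≤ L * ‖p.1‖ * ‖p.2‖ ∧ q (sqrt p.1, sqrt p.1) = p.1 ∧
      ‖sqrt p.1‖ ≤ ‖p.1‖ ∧ ContinuousAt Θ p.1 ∧ ContinuousAt q p) :
    ∃ C : LocalGroupChart E G, C.toFun = Θ := by
  obtain ⟨s, hs, hΘs⟩ := hinj
  obtain ⟨ρ₁, hρ₁, hball₁⟩ := Metric.mem_nhds_iff.mp hs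
  obtain ⟨ρ₂, hρ₂, hball₂⟩ := Metric.eventually_nhds_iff.mp h
  set r := min (min ρ₁ ρ₂ / 2) (1 / (2 * (L + 1)))
  have hr : 0 < r := by positivity
  have hrρ₁ : r < ρ₁ := (min_le_left _ _).trans_lt (by linarith [min_le_left ρ₁ ρ₂])
  have hrρ₂ : r < ρ₂ := (min_le_left _ _).trans_lt (by linarith [min_le_right ρ₁ ρ₂])
  have hmem : ∀ a b : E, ‖a‖ ≤ r → ‖b‖ ≤ r → dist ((a, b) : E × E) 0 < ρ₂ := fun a b ha hb => by
    simpa [Prod.dist_eq] using ⟨ha.trans_lt hrρ₂, hb.trans_lt hrρ₂⟩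
  have hclosedBall : ∀ a ∈ closedBall (0 : E) r, ‖a‖ ≤ r := fun a => mem_closedBall_zero_iff.mp
  exact ⟨{
    toFun := Θ
    mul := fun a b => q (a, b)
    sqrt := sqrt
    radius := r
    lip := L
    radius_pos := hr
    lip_nonneg := hL
    lip_mul_radius_le := by
      calc L * r ≤ L * (1 / (2 * (L + 1))) := by gcongr; exact min_le_right _ _
        _ ≤ 1 / 2 := by rw [mul_one_div, div_le_iff₀ (by positivity)]; linarith
    toFun_mul := fun a b ha hb => (hball₂ (hmem a b ha hb)).1
    norm_mul_sub_sub_le := fun a b ha hb => (hball₂ (hmem a b ha hb)).2.1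
    mul_sqrt_self := fun y hy => (hball₂ (hmem y y hy hy)).2.2.1
    norm_sqrt_le := fun y hy => (hball₂ (hmem y y hy hy)).2.2.2.1
    injOn_toFun := hΘs.mono fun a ha => hball₁ (by simpa using (hclosedBall a ha).trans_lt hrρ₁)
    continuousOn_toFun := fun a ha =>
      (hball₂ (hmem a a (hclosedBall a ha) (hclosedBall a ha))).2.2.2.2.1.continuousWithinAt
    continuousAt_mul := fun a b ha hb => (hball₂ (hmem a b ha hb)).2.2.2.2.2 }, rfl⟩

theorem eq_of_toFun_eq (ha : ‖a‖ ≤ C.radius) (hb : ‖b‖ ≤ C.radius) (h : C.toFun a = C.toFun b) :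
    a = b :=
  C.injOn_toFun (mem_closedBall_zero_iff.mpr ha) (mem_closedBall_zero_iff.mpr hb) h

theorem lip_mul_le_half (ha : ‖a‖ ≤ C.radius) : C.lip * ‖a‖ ≤ 1 / 2 :=
  (mul_le_mul_of_nonneg_left ha C.lip_nonneg).trans C.lip_mul_radius_le

theorem mul_zero_left (hb : ‖b‖ ≤ C.radius) : C.mul 0 b = b := by
  simpa [sub_eq_zero] using C.norm_mul_sub_sub_le 0 b (by simpa using C.radius_pos.le) hb

theorem toFun_zero : C.toFun 0 = 1 := by
  have h := C.toFun_mul 0 0 (by simpa using C.radius_pos.le) (by simpa using C.radius_pos.le)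
  rwa [C.mul_zero_left (by simpa using C.radius_pos.le), left_eq_mul] at h

theorem norm_mul_sub_le (ha : ‖a‖ ≤ C.radius) (hb : ‖b‖ ≤ C.radius) :
    ‖C.mul a b - a‖ ≤ 2 * ‖b‖ := by
  calc ‖C.mul a b - a‖ = ‖(C.mul a b - a - b) + b‖ := by rw [sub_add_cancel]
    _ ≤ ‖C.mul a b - a - b‖ + ‖b‖ := norm_add_le _ _
    _ ≤ C.lip * ‖a‖ * ‖b‖ + ‖b‖ := by grw [C.norm_mul_sub_sub_le a b ha hb]
    _ ≤ 2 * ‖b‖ := by nlinarith [C.lip_mul_le_half ha, norm_nonneg b]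

theorem norm_mul_le (ha : ‖a‖ ≤ C.radius) (hb : ‖b‖ ≤ C.radius) :
    ‖C.mul a b‖ ≤ ‖a‖ + 2 * ‖b‖ := by
  have := norm_le_insert' (C.mul a b) a
  linarith [C.norm_mul_sub_le ha hb]

/-- Coordinates of the `m`-th power of `C.toFun a`. -/
def pow (a : E) (m : ℕ) : E := (fun x => C.mul x a)^[m] 0

theorem pow_succ (a : E) (m : ℕ) : C.pow a (m + 1) = C.mul (C.pow a m) a :=
  Function.iterate_succ_apply' _ m 0

theorem norm_pow_le : ∀ m : ℕ, 2 * m * ‖a‖ ≤ C.radius → ‖C.pow a m‖ ≤ 2 * m * ‖a‖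
  | 0, _ => by simp [pow]
  | m + 1, hm => by
    push_cast at hm ⊢
    have ha : ‖a‖ ≤ C.radius := by nlinarith [norm_nonneg a, (m.cast_nonneg : (0 : ℝ) ≤ m)]
    have ih := norm_pow_le m (by nlinarith [norm_nonneg a])
    rw [pow_succ]
    linarith [C.norm_mul_le (ih.trans (by nlinarith [norm_nonneg a])) ha]

theorem toFun_pow : ∀ m : ℕ, 2 * m * ‖a‖ ≤ C.radius → C.toFun (C.pow a m) = C.toFun a ^ m
  | 0, _ => by simp [pow, toFun_zero]
  | m + 1, hm => by
    push_cast at hm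
    have ha : ‖a‖ ≤ C.radius := by nlinarith [norm_nonneg a, (m.cast_nonneg : (0 : ℝ) ≤ m)]
    have hm' : 2 * m * ‖a‖ ≤ C.radius := by nlinarith [norm_nonneg a]
    rw [pow_succ, C.toFun_mul _ _ ((C.norm_pow_le m hm').trans hm') ha, toFun_pow m hm',
      _root_.pow_succ]

theorem mul_pow_pow {i j : ℕ} (h : 4 * (i + j) * ‖a‖ ≤ C.radius) :
    C.mul (C.pow a i) (C.pow a j) = C.pow a (i + j) := by
  have hi : 2 * i * ‖a‖ ≤ C.radius := by nlinarith [norm_nonneg a, (j.cast_nonneg : (0 : ℝ) ≤ j)]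
  have hj : 2 * j * ‖a‖ ≤ C.radius := by nlinarith [norm_nonneg a, (i.cast_nonneg : (0 : ℝ) ≤ i)]
  have hij : 2 * ((i + j : ℕ) : ℝ) * ‖a‖ ≤ C.radius := by push_cast; nlinarith [norm_nonneg a]
  have hpi := C.norm_pow_le i hi
  have hpj := C.norm_pow_le j hj
  refine C.eq_of_toFun_eq ((C.norm_mul_le (hpi.trans hi) (hpj.trans hj)).trans ?_)
    ((C.norm_pow_le _ hij).trans hij) ?_
  · nlinarith [mul_nonneg (Nat.cast_nonneg i : (0 : ℝ) ≤ i) (norm_nonneg a),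
      mul_nonneg (Nat.cast_nonneg j : (0 : ℝ) ≤ j) (norm_nonneg a)]
  · rw [C.toFun_mul _ _ (hpi.trans hi) (hpj.trans hj), C.toFun_pow i hi, C.toFun_pow j hj,
      C.toFun_pow _ hij, _root_.pow_add]

theorem pow_sqrt_two_mul (hy : ‖y‖ ≤ C.radius) {m : ℕ} (hm : 4 * m * ‖y‖ ≤ C.radius) :
    C.pow (C.sqrt y) (2 * m) = C.pow y m := by
  have hs : ‖C.sqrt y‖ ≤ ‖y‖ := C.norm_sqrt_le y hy
  have h2m : 2 * ((2 * m : ℕ) : ℝ) * ‖C.sqrt y‖ ≤ C.radius := by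
    push_cast; nlinarith [norm_nonneg y, (m.cast_nonneg : (0 : ℝ) ≤ m)]
  have hm' : 2 * (m : ℝ) * ‖y‖ ≤ C.radius := by nlinarith [norm_nonneg y]
  refine C.eq_of_toFun_eq ((C.norm_pow_le _ h2m).trans h2m) ((C.norm_pow_le _ hm').trans hm') ?_
  rw [C.toFun_pow _ h2m, C.toFun_pow _ hm', _root_.pow_mul, sq,
    ← C.toFun_mul _ _ (hs.trans hy) (hs.trans hy), C.mul_sqrt_self y hy]

/-- Coordinates of the `2 ^ n`-th root of `C.toFun w` obtained by iterating `C.sqrt`. -/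
def root (w : E) (n : ℕ) : E := C.sqrt^[n] w

theorem root_succ (w : E) (n : ℕ) : C.root w (n + 1) = C.sqrt (C.root w n) :=
  Function.iterate_succ_apply' _ n w

theorem norm_root_le (hw : ‖w‖ ≤ C.radius) : ∀ n, ‖C.root w n‖ ≤ ‖w‖
  | 0 => le_rfl
  | n + 1 => by
    rw [root_succ]
    exact (C.norm_sqrt_le _ ((norm_root_le hw n).trans hw)).trans (norm_root_le hw n)

variable [NormedSpace ℝ E]

theorem norm_sqrt_le_half (hy : ‖y‖ ≤ C.radius) :
    ‖C.sqrt y‖ ≤ ‖y‖ / 2 * (1 + C.lip * ‖y‖) := by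
  set s := C.sqrt y
  have hs : ‖s‖ ≤ ‖y‖ := C.norm_sqrt_le y hy
  have herr := C.norm_mul_sub_sub_le s s (hs.trans hy) (hs.trans hy)
  rw [C.mul_sqrt_self y hy] at herr
  have h2s : 2 * ‖s‖ ≤ ‖y‖ + ‖y - s - s‖ := by
    calc 2 * ‖s‖ = ‖y - (y - s - s)‖ := by
          rw [sub_sub, sub_sub_cancel, ← two_smul ℝ s, norm_smul, Real.norm_two]
      _ ≤ ‖y‖ + ‖y - s - s‖ := norm_sub_le _ _
  nlinarith [norm_nonneg s, C.lip_nonneg, mul_le_mul hs hs (norm_nonneg s) (norm_nonneg y)]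

theorem two_pow_mul_norm_root_le (hw : 16 * ‖w‖ ≤ C.radius) (n : ℕ) :
    2 ^ n * ‖C.root w n‖ ≤ 2 * ‖w‖ := by
  have hw' : ‖w‖ ≤ C.radius := by linarith [norm_nonneg w]
  refine two_pow_mul_le_of_le_half_mul (fun n => norm_nonneg _) C.lip_nonneg ?_ (fun n => ?_) n
  · have := C.lip_mul_radius_le
    have := C.lip_nonneg
    simp only [root, Function.iterate_zero, id_eq]
    nlinarith
  · rw [root_succ]
    exact C.norm_sqrt_le_half ((C.norm_root_le hw' n).trans hw')

/-- Coordinates of `C.toFun w ^ (m / 2 ^ n)`. -/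
def dyadicPow (w : E) (n m : ℕ) : E := C.pow (C.root w n) m

theorem four_mul_norm_root_le (hw : 16 * ‖w‖ ≤ C.radius) {n m : ℕ} (hm : m ≤ 2 ^ n) :
    4 * m * ‖C.root w n‖ ≤ 8 * ‖w‖ := by
  have hm' : (m : ℝ) ≤ 2 ^ n := by exact_mod_cast hm
  nlinarith [C.two_pow_mul_norm_root_le hw n, norm_nonneg (C.root w n)]

theorem norm_dyadicPow_le (hw : 16 * ‖w‖ ≤ C.radius) {n m : ℕ} (hm : m ≤ 2 ^ n) :
    ‖C.dyadicPow w n m‖ ≤ 4 * ‖w‖ := by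
  have h := C.four_mul_norm_root_le hw hm
  have h2 : 2 * (m : ℝ) * ‖C.root w n‖ ≤ C.radius := by
    nlinarith [norm_nonneg (C.root w n), norm_nonneg w, (m.cast_nonneg : (0 : ℝ) ≤ m)]
  exact (C.norm_pow_le m h2).trans (by linarith)

theorem mul_dyadicPow (hw : 16 * ‖w‖ ≤ C.radius) {n i j : ℕ} (hij : i + j ≤ 2 ^ n) :
    C.mul (C.dyadicPow w n i) (C.dyadicPow w n j) = C.dyadicPow w n (i + j) := by
  refine C.mul_pow_pow ?_
  have := C.four_mul_norm_root_le hw hij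
  push_cast at this
  linarith [norm_nonneg w]

theorem dyadicLipschitz (hw : 16 * ‖w‖ ≤ C.radius) :
    DyadicLipschitz (C.dyadicPow w) (8 * ‖w‖) where
  two_mul n m hm := by
    have hw' : ‖w‖ ≤ C.radius := by linarith [norm_nonneg w]
    rw [dyadicPow, root_succ, C.pow_sqrt_two_mul ((C.norm_root_le hw' n).trans hw')
      ((C.four_mul_norm_root_le hw hm).trans (by linarith)), dyadicPow]
  dist_le n a b ha hb := by
    wlog hab : a ≤ b generalizing a b
    · rw [dist_comm, abs_sub_comm]
      exact this b a hb ha (le_of_not_ge hab)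
    obtain ⟨d, rfl⟩ := Nat.exists_eq_add_of_le hab
    have hd : d ≤ 2 ^ n := by omega
    have hu := C.two_pow_mul_norm_root_le hw n
    have h2d : 2 * (d : ℝ) * ‖C.root w n‖ ≤ C.radius := by
      have := C.four_mul_norm_root_le hw hd
      nlinarith [norm_nonneg (C.root w n), norm_nonneg w, (d.cast_nonneg : (0 : ℝ) ≤ d)]
    have hrad : 4 * ‖w‖ ≤ C.radius := by linarith [norm_nonneg w]
    have hd' : (d : ℝ) * 2 ^ n * ‖C.root w n‖ ≤ d * (2 * ‖w‖) := by
      rw [mul_assoc]; exact mul_le_mul_of_nonneg_left hu d.cast_nonneg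
    calc dist (C.dyadicPow w n a) (C.dyadicPow w n (a + d))
        = ‖C.mul (C.dyadicPow w n a) (C.dyadicPow w n d) - C.dyadicPow w n a‖ := by
          rw [dist_comm, dist_eq_norm, C.mul_dyadicPow hw hb]
      _ ≤ 2 * ‖C.dyadicPow w n d‖ := C.norm_mul_sub_le
          ((C.norm_dyadicPow_le hw ha).trans hrad) ((C.norm_dyadicPow_le hw hd).trans hrad)
      _ ≤ 2 * (2 * d * ‖C.root w n‖) := by gcongr; exact C.norm_pow_le d h2d
      _ ≤ 8 * ‖w‖ * |(a : ℝ) - (a + d : ℕ)| / 2 ^ n := by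
          rw [Nat.cast_add, sub_add_cancel_left, abs_neg, Nat.abs_cast, le_div_iff₀ (by positivity)]
          nlinarith

theorem dyadicPow_two_pow (hw : 16 * ‖w‖ ≤ C.radius) : ∀ n, C.dyadicPow w n (2 ^ n) = w
  | 0 => by
    simp [dyadicPow, root, LocalGroupChart.pow, C.mul_zero_left (show ‖w‖ ≤ C.radius by
      linarith [norm_nonneg w])]
  | n + 1 => by
    rw [_root_.pow_succ, mul_comm, (C.dyadicLipschitz hw).two_mul n _ le_rfl,
      dyadicPow_two_pow hw n]

variable [CompleteSpace E] {s t : ℝ}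

theorem norm_dyadicLimit_le (hw : 16 * ‖w‖ ≤ C.radius) (ht : t ∈ Icc (0 : ℝ) 1) :
    ‖dyadicLimit (C.dyadicPow w) t‖ ≤ 4 * ‖w‖ := by
  simpa using isClosed_closedBall.mem_of_tendsto
    ((C.dyadicLipschitz hw).tendsto_dyadicLimit ht)
    (Eventually.of_forall fun n => mem_closedBall_zero_iff.mpr
      (C.norm_dyadicPow_le hw (natFloor_two_pow_mul_le ht.2 n)))

theorem dyadicLimit_one (hw : 16 * ‖w‖ ≤ C.radius) : dyadicLimit (C.dyadicPow w) 1 = w := by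
  refine tendsto_nhds_unique ((C.dyadicLipschitz hw).tendsto_dyadicLimit ⟨zero_le_one, le_rfl⟩) ?_
  have hfloor : ∀ n : ℕ, ⌊(2 : ℝ) ^ n * 1⌋₊ = 2 ^ n := fun n => by
    rw [mul_one]; exact_mod_cast Nat.floor_natCast (2 ^ n)
  simp_rw [hfloor, C.dyadicPow_two_pow hw]
  exact tendsto_const_nhds

theorem mul_dyadicLimit (hw : 16 * ‖w‖ ≤ C.radius) (hs : 0 ≤ s) (ht : 0 ≤ t) (hst : s + t ≤ 1) :
    C.mul (dyadicLimit (C.dyadicPow w) s) (dyadicLimit (C.dyadicPow w) t) =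
      dyadicLimit (C.dyadicPow w) (s + t) := by
  have hV := C.dyadicLipschitz hw
  have hs' : s ∈ Icc (0 : ℝ) 1 := ⟨hs, by linarith⟩
  have ht' : t ∈ Icc (0 : ℝ) 1 := ⟨ht, by linarith⟩
  have hrad : 4 * ‖w‖ ≤ C.radius := by linarith [norm_nonneg w]
  set A := fun n : ℕ => ⌊(2 : ℝ) ^ n * s⌋₊
  set B := fun n : ℕ => ⌊(2 : ℝ) ^ n * t⌋₊
  have hAB : ∀ n, A n + B n ≤ 2 ^ n := fun n => by
    have hA := Nat.floor_le (show 0 ≤ (2 : ℝ) ^ n * s by positivity)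
    have hB := Nat.floor_le (show 0 ≤ (2 : ℝ) ^ n * t by positivity)
    have : ((A n + B n : ℕ) : ℝ) ≤ (2 ^ n : ℕ) := by
      push_cast; nlinarith [(by positivity : (0 : ℝ) < 2 ^ n)]
    exact_mod_cast this
  have hlim : Tendsto (fun n => C.dyadicPow w n (A n + B n)) atTop
      (𝓝 (dyadicLimit (C.dyadicPow w) (s + t))) := by
    refine hV.tendsto_of_abs_sub_le ⟨by linarith, hst⟩ hAB (c := 2) fun n => ?_
    have hA := abs_natFloor_sub_le (show 0 ≤ (2 : ℝ) ^ n * s by positivity)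
    have hB := abs_natFloor_sub_le (show 0 ≤ (2 : ℝ) ^ n * t by positivity)
    calc |((A n + B n : ℕ) : ℝ) - 2 ^ n * (s + t)|
        = |((A n : ℝ) - 2 ^ n * s) + ((B n : ℝ) - 2 ^ n * t)| := by push_cast; ring_nf
      _ ≤ 2 := (abs_add_le _ _).trans (by linarith)
  refine tendsto_nhds_unique ?_ hlim
  have hmul := (C.continuousAt_mul _ _ ((C.norm_dyadicLimit_le hw hs').trans hrad)
    ((C.norm_dyadicLimit_le hw ht').trans hrad)).tendsto.comp
    ((hV.tendsto_dyadicLimit hs').prodMk_nhds (hV.tendsto_dyadicLimit ht'))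
  exact hmul.congr fun n => C.mul_dyadicPow hw (hAB n)

theorem exists_local_oneParameterSubgroup (hw : 16 * ‖w‖ ≤ C.radius) :
    ∃ X : ℝ → G, ContinuousOn X (Icc 0 1) ∧
      (∀ a b, 0 ≤ a → 0 ≤ b → a + b ≤ 1 → X (a + b) = X a * X b) ∧ X 1 = C.toFun w := by
  have hrad : 4 * ‖w‖ ≤ C.radius := by linarith [norm_nonneg w]
  refine ⟨C.toFun ∘ dyadicLimit (C.dyadicPow w), ?_, fun a b ha hb hab => ?_, ?_⟩
  · exact C.continuousOn_toFun.comp (C.dyadicLipschitz hw).continuousOn fun t ht =>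
      mem_closedBall_zero_iff.mpr ((C.norm_dyadicLimit_le hw ht).trans hrad)
  · simp only [Function.comp_apply]
    rw [← C.mul_dyadicLimit hw ha hb hab, C.toFun_mul _ _
      ((C.norm_dyadicLimit_le hw ⟨ha, by linarith⟩).trans hrad)
      ((C.norm_dyadicLimit_le hw ⟨hb, by linarith⟩).trans hrad)]
  · simp only [Function.comp_apply, C.dyadicLimit_one hw]

end LocalGroupChart

theorem exists_localGroupChart {E G : Type*} [NormedAddCommGroup E] [NormedSpace ℝ E]
    [CompleteSpace E] [TopologicalSpace G] [Group G] [ContinuousMul G]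
    (e : OpenPartialHomeomorph G E) (h1 : (1 : G) ∈ e.source)
    (he : ContDiffAt ℝ 2 (fun p : E × E => e (e.symm p.1 * e.symm p.2)) (e 1, e 1)) :
    ∃ C : LocalGroupChart E G, C.toFun = fun z => e.symm (e 1 + z) := by
  set x₀ := e 1
  set Θ : E → G := fun z => e.symm (x₀ + z)
  set q : E × E → E := fun p => e (Θ p.1 * Θ p.2) - x₀
  have hΘ0 : Θ 0 = 1 := by simp [Θ, x₀, e.left_inv h1]
  have htarget : ∀ᶠ z in 𝓝 (0 : E), x₀ + z ∈ e.target :=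
    (continuous_const_add x₀).continuousAt.preimage_mem_nhds
      (e.open_target.mem_nhds (by simpa using e.map_source h1))
  have hΘcont : ∀ᶠ z in 𝓝 (0 : E), ContinuousAt Θ z := htarget.mono fun z hz =>
    (e.continuousAt_symm hz).comp (continuous_const_add x₀).continuousAt
  have hsource : ∀ᶠ p in 𝓝 (0 : E × E), Θ p.1 * Θ p.2 ∈ e.source := by
    have hcont : ContinuousAt (fun p : E × E => Θ p.1 * Θ p.2) 0 :=
      (hΘcont.self_of_nhds.comp (x := (0 : E × E)) continuousAt_fst).mul
        (hΘcont.self_of_nhds.comp (x := (0 : E × E)) continuousAt_snd)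
    exact hcont.preimage_mem_nhds (e.open_source.mem_nhds (by simpa [hΘ0] using h1))
  have hq : ContDiffAt ℝ 2 q 0 := by
    have he' : ContDiffAt ℝ 2 (fun p : E × E => e (e.symm p.1 * e.symm p.2))
        ((fun p : E × E => (x₀ + p.1, x₀ + p.2)) 0) := by simpa using he
    exact (he'.comp (0 : E × E) ((contDiff_const.add contDiff_fst).prodMk
      (contDiff_const.add contDiff_snd)).contDiffAt).sub contDiffAt_const
  have hq₁ : ∀ᶠ a in 𝓝 (0 : E), q (a, 0) = a := htarget.mono fun a ha => by
    simp [q, Θ, e.right_inv ha, e.left_inv h1, x₀]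
  have hq₂ : ∀ᶠ b in 𝓝 (0 : E), q (0, b) = b := htarget.mono fun b hb => by
    simp [q, Θ, e.right_inv hb, e.left_inv h1, x₀]
  obtain ⟨L, hL, hLq⟩ := exists_eventually_norm_le_mul_norm_mul_norm
    ((hq.sub contDiffAt_fst).sub contDiffAt_snd)
    (hq₁.mono fun a ha => by simp [ha]) (hq₂.mono fun b hb => by simp [hb])
  obtain ⟨sqrt, hsqrt⟩ := exists_eventually_sqrt (hq.of_le one_le_two) hq₁ hq₂
  have hinj : InjOn Θ {z | x₀ + z ∈ e.target} := fun z hz z' hz' h =>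
    add_left_cancel (by rw [← e.right_inv hz, ← e.right_inv hz']; exact congrArg e h)
  refine LocalGroupChart.exists_of_eventually Θ q sqrt hL ⟨_, htarget, hinj⟩ ?_
  filter_upwards [hsource, hLq, (continuous_fst.tendsto' (0 : E × E) 0 rfl).eventually hsqrt,
    (continuous_fst.tendsto' (0 : E × E) 0 rfl).eventually hΘcont,
    hq.eventually (by simp)] with p hp hpL hps hpΘ hpq
  exact ⟨by simp [q, Θ, e.left_inv hp], hpL, hps.1, hps.2, hpΘ, hpq.continuousAt⟩

theorem OpenPartialHomeomorph.image_symm_const_add_closedBall_mem_nhds {X E : Type*}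
    [TopologicalSpace X] [NormedAddCommGroup E] (e : OpenPartialHomeomorph X E) {x : X}
    (hx : x ∈ e.source) {ε : ℝ} (hε : 0 < ε) :
    (fun z => e.symm (e x + z)) '' closedBall 0 ε ∈ 𝓝 x := by
  filter_upwards [e.open_source.mem_nhds hx, e.continuousAt hx (closedBall_mem_nhds (e x) hε)]
    with y hy hyε
  exact ⟨e y - e x, by simpa [dist_eq_norm] using hyε, by simp [e.left_inv hy]⟩

section Extension

variable {G : Type*} [Group G]

noncomputable def nonnegExtension (X : ℝ → G) (t : ℝ) : G := X (t / (⌊t⌋₊ + 1)) ^ (⌊t⌋₊ + 1)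

/-- This is `P t` for `t ≥ 0` and `(P (-t))⁻¹` for `t ≤ 0`. -/
def realExtension (P : ℝ → G) (t : ℝ) : G := P (t + |t|) * (P |t|)⁻¹

variable {X P : ℝ → G}

theorem map_natCast_mul (hadd : ∀ a b, 0 ≤ a → 0 ≤ b → a + b ≤ 1 → X (a + b) = X a * X b)
    {a : ℝ} (ha : 0 ≤ a) : ∀ k : ℕ, k * a ≤ 1 → X (k * a) = X a ^ k
  | 0, _ => by simpa using hadd 0 0 le_rfl le_rfl (by norm_num)
  | k + 1, hk => by
    have hka : (k : ℝ) * a ≤ 1 := by push_cast at hk; nlinarith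
    rw [Nat.cast_succ, add_one_mul, hadd _ _ (by positivity) ha (by push_cast at hk; linarith),
      map_natCast_mul hadd ha k hka, pow_succ]

theorem nonnegExtension_eq (hadd : ∀ a b, 0 ≤ a → 0 ≤ b → a + b ≤ 1 → X (a + b) = X a * X b)
    {t : ℝ} (ht : 0 ≤ t) {n : ℕ} (hn : 0 < n) (htn : t ≤ n) :
    nonnegExtension X t = X (t / n) ^ n := by
  have refine_pow : ∀ m : ℕ, 0 < m → t ≤ m → ∀ k : ℕ, 0 < k →
      X (t / m) ^ m = X (t / (m * k)) ^ (m * k) := by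
    intro m hm htm k hk
    have hmk : (k : ℝ) * (t / (m * k)) = t / m := by field_simp
    have hle : (k : ℝ) * (t / (m * k)) ≤ 1 := by rw [hmk, div_le_one (by positivity)]; exact htm
    rw [← hmk, map_natCast_mul hadd (by positivity) k hle, ← pow_mul, mul_comm k m]
  have hfloor : t ≤ ((⌊t⌋₊ + 1 : ℕ) : ℝ) := by push_cast; exact (Nat.lt_floor_add_one t).le
  rw [nonnegExtension, ← Nat.cast_succ, refine_pow _ (Nat.succ_pos _) hfloor n hn,
    refine_pow n hn htn _ (Nat.succ_pos _), mul_comm (n : ℝ), mul_comm n]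

theorem nonnegExtension_add (hadd : ∀ a b, 0 ≤ a → 0 ≤ b → a + b ≤ 1 → X (a + b) = X a * X b)
    {s t : ℝ} (hs : 0 ≤ s) (ht : 0 ≤ t) :
    nonnegExtension X (s + t) = nonnegExtension X s * nonnegExtension X t := by
  set n := ⌈s + t⌉₊ + 1
  have hn : (0 : ℝ) < n := by positivity
  have hstn : s + t ≤ n := (Nat.le_ceil _).trans (by simp [n])
  have hsum : s / n + t / n ≤ 1 := by rw [← add_div, div_le_one hn]; exact hstn
  have hcomm : Commute (X (s / n)) (X (t / n)) := by
    rw [Commute, SemiconjBy, ← hadd _ _ (by positivity) (by positivity) hsum, add_comm,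
      hadd _ _ (by positivity) (by positivity) (by linarith)]
  rw [nonnegExtension_eq hadd (by positivity) (Nat.succ_pos _) hstn,
    nonnegExtension_eq hadd hs (Nat.succ_pos _) (by linarith),
    nonnegExtension_eq hadd ht (Nat.succ_pos _) (by linarith), add_div,
    hadd _ _ (by positivity) (by positivity) hsum, hcomm.mul_pow]

theorem continuousOn_nonnegExtension [TopologicalSpace G] [ContinuousMul G]
    (hX : ContinuousOn X (Icc 0 1))
    (hadd : ∀ a b, 0 ≤ a → 0 ≤ b → a + b ≤ 1 → X (a + b) = X a * X b) :
    ContinuousOn (nonnegExtension X) (Ici 0) := by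
  intro t ht
  set n := ⌊t⌋₊ + 1
  have hn : (0 : ℝ) < n := by positivity
  have htn : t < n := by simpa [n] using Nat.lt_floor_add_one t
  have hpow : ContinuousOn (fun u => X (u / n) ^ n) (Icc 0 n) :=
    (hX.comp (continuousOn_id.div_const _) fun u hu =>
      ⟨div_nonneg hu.1 hn.le, (div_le_one hn).mpr hu.2⟩).pow n
  have hIcc : Icc 0 (n : ℝ) ∈ 𝓝[Ici 0] t :=
    mem_nhdsWithin.mpr ⟨Iio n, isOpen_Iio, htn, fun u hu => ⟨hu.2, le_of_lt hu.1⟩⟩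
  refine ((hpow t ⟨ht, htn.le⟩).mono_of_mem_nhdsWithin hIcc).congr_of_eventuallyEq ?_
    (nonnegExtension_eq hadd ht (Nat.succ_pos _) htn.le)
  filter_upwards [hIcc] with u hu using nonnegExtension_eq hadd hu.1 (Nat.succ_pos _) hu.2

theorem realExtension_eq (hadd : ∀ a b, 0 ≤ a → 0 ≤ b → P (a + b) = P a * P b)
    {t c : ℝ} (hc : 0 ≤ c) (htc : 0 ≤ t + c) : realExtension P t = P (t + c) * (P c)⁻¹ := by
  have shift : ∀ b d, 0 ≤ b → 0 ≤ t + b → 0 ≤ d →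
      P (t + b + d) * (P (b + d))⁻¹ = P (t + b) * (P b)⁻¹ := fun b d hb htb hd => by
    rw [hadd _ _ htb hd, hadd _ _ hb hd, mul_inv_rev]
    group
  have ht : 0 ≤ t + |t| := by linarith [neg_abs_le t]
  calc realExtension P t = P (t + |t| + c) * (P (|t| + c))⁻¹ :=
        (shift _ _ (abs_nonneg t) ht hc).symm
    _ = P (t + c + |t|) * (P (c + |t|))⁻¹ := by rw [add_right_comm, add_comm |t|]
    _ = P (t + c) * (P c)⁻¹ := shift _ _ hc htc (abs_nonneg t)

theorem realExtension_add (hadd : ∀ a b, 0 ≤ a → 0 ≤ b → P (a + b) = P a * P b) (s t : ℝ) :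
    realExtension P (s + t) = realExtension P s * realExtension P t := by
  have hcomm : ∀ a b, 0 ≤ a → 0 ≤ b → Commute (P a) (P b) := fun a b ha hb => by
    rw [Commute, SemiconjBy, ← hadd a b ha hb, add_comm, hadd b a hb ha]
  have hs := abs_nonneg s
  have ht := abs_nonneg t
  have hss : 0 ≤ s + |s| := by linarith [neg_abs_le s]
  have htt : 0 ≤ t + |t| := by linarith [neg_abs_le t]
  have h : Commute (P (t + |t|) * (P |t|)⁻¹) (P |s|)⁻¹ :=
    ((hcomm _ _ htt hs).mul_left (hcomm _ _ ht hs).inv_left).inv_right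
  rw [realExtension_eq hadd (add_nonneg hs ht) (by linarith), realExtension, realExtension,
    show s + t + (|s| + |t|) = (s + |s|) + (t + |t|) by ring, hadd _ _ hss htt, hadd _ _ hs ht,
    mul_inv_rev, mul_assoc, ← mul_assoc (P (t + |t|)), h.eq, ← mul_assoc, ← mul_assoc]

theorem continuous_realExtension [TopologicalSpace G] [ContinuousMul G]
    (hP : ContinuousOn P (Ici 0)) (hadd : ∀ a b, 0 ≤ a → 0 ≤ b → P (a + b) = P a * P b) :
    Continuous (realExtension P) := by
  refine continuous_iff_continuousAt.mpr fun t => ?_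
  have ht : 0 < t + (|t| + 1) := by linarith [neg_abs_le t]
  have hshift : ContinuousAt (fun u => P (u + (|t| + 1)) * (P (|t| + 1))⁻¹) t :=
    ((hP.continuousAt (Ici_mem_nhds ht)).comp (f := fun u => u + (|t| + 1))
      (continuousAt_id.add continuousAt_const)).mul continuousAt_const
  refine hshift.congr ?_
  filter_upwards [Ioi_mem_nhds (show -(|t| + 1) < t by linarith)] with u hu
  exact (realExtension_eq hadd (by positivity) (by linarith [mem_Ioi.mp hu])).symm

theorem exists_continuous_map_add_of_local [TopologicalSpace G] [ContinuousMul G]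
    (hX : ContinuousOn X (Icc 0 1))
    (hadd : ∀ a b, 0 ≤ a → 0 ≤ b → a + b ≤ 1 → X (a + b) = X a * X b) :
    ∃ Y : ℝ → G, Continuous Y ∧ (∀ s t, Y (s + t) = Y s * Y t) ∧ Y 1 = X 1 := by
  have hP := fun a b (ha : (0 : ℝ) ≤ a) (hb : 0 ≤ b) => nonnegExtension_add hadd ha hb
  refine ⟨realExtension (nonnegExtension X), continuous_realExtension
    (continuousOn_nonnegExtension hX hadd) hP, realExtension_add hP, ?_⟩
  have h0 : nonnegExtension X 0 = 1 := by simpa using hP 0 0 le_rfl le_rfl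
  rw [realExtension_eq hP le_rfl (by norm_num), add_zero, h0, inv_one, mul_one,
    nonnegExtension_eq hadd zero_le_one one_pos (by norm_num)]
  simp

end Extension

theorem LieGroup.contDiffAt_chartAt_mul {E : Type*} [NormedAddCommGroup E] [NormedSpace ℝ E]
    (G : Type*) [TopologicalSpace G] [ChartedSpace E G] [Group G] {n : WithTop ℕ∞}
    [LieGroup 𝓘(ℝ, E) n G] (hn : 2 ≤ n) :
    ContDiffAt ℝ 2 (fun p : E × E => chartAt E (1 : G) ((chartAt E (1 : G)).symm p.1 *
      (chartAt E (1 : G)).symm p.2)) (chartAt E (1 : G) 1, chartAt E (1 : G) 1) := by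
  have h := (contMDiffAt_iff.mp ((contMDiff_mul 𝓘(ℝ, E) n (G := G)).contMDiffAt
    (x := ((1 : G), (1 : G))))).2
  rw [extChartAt_prod, ModelWithCorners.range_eq_univ, contDiffWithinAt_univ] at h
  simp only [mul_one] at h
  exact h.of_le hn

/-- In a Lie group modeled on a finite-dimensional real normed space, some
neighborhood of the identity is covered by one-parameter subgroups. -/
theorem exists_nhds_covered_by_one_parameter_subgroups
    {E : Type*} [NormedAddCommGroup E] [NormedSpace ℝ E] [FiniteDimensional ℝ E]
    (G : Type*) [TopologicalSpace G] [ChartedSpace E G] [Group G]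
    [IsTopologicalGroup G] [LieGroup 𝓘(ℝ, E) (⊤ : ℕ∞) G] :
    ∃ U ∈ nhds (1 : G), ∀ g ∈ U, ∃ X : ℝ → G,
      Continuous X ∧ (∀ s t : ℝ, X (s + t) = X s * X t) ∧ X 1 = g := by
  have : CompleteSpace E := FiniteDimensional.complete ℝ E
  obtain ⟨C, hC⟩ := exists_localGroupChart (chartAt E (1 : G)) (mem_chart_source E 1)
    (LieGroup.contDiffAt_chartAt_mul G ENat.LEInfty.out)
  refine ⟨C.toFun '' closedBall 0 (C.radius / 16), ?_, ?_⟩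
  · rw [hC]
    exact (chartAt E (1 : G)).image_symm_const_add_closedBall_mem_nhds (mem_chart_source E 1)
      (by linarith [C.radius_pos])
  rintro _ ⟨w, hw, rfl⟩
  obtain ⟨X, hXc, hXadd, hX1⟩ :=
    C.exists_local_oneParameterSubgroup (by linarith [mem_closedBall_zero_iff.mp hw])
  obtain ⟨Y, hYc, hYadd, hY1⟩ := exists_continuous_map_add_of_local hXc hXadd
  exact ⟨Y, hYc, hYadd, hY1.trans hX1⟩
end
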